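/- arXiv:2101.11995 — 3 statements merged into one kernel-verified Lean document; each statement's English description precedes it below -/
import Mathlib

section
/- Let n ≥ 3 and let S and T be standard Young tableaux with n entries. If the set of 1-minors of S equals the set of 1-minors of T, then S and T have the same shape. (The set of 1-minors of a tableau with at least 3 entries determines the shape of the tableau.) -/
/-- A standard Young tableau with `n` entries, encoded by its entry function
`entry : ℕ × ℕ → ℕ`: `entry (i, j) = 0` means there is no cell in row `i` and
column `j` (both 0-indexed), and otherwise `entry (i, j)` is the label
(one of `1, …, n`) of the cell `(i, j)`.  Rows increase from left to right and
columns increase from top to bottom. -/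
structure SYT (n : ℕ) where
  entry : ℕ × ℕ → ℕ
  /-- the set of cells is the Young diagram of a partition -/
  diagram : ∀ i j i' j', i' ≤ i → j' ≤ j → entry (i, j) ≠ 0 → entry (i', j') ≠ 0
  /-- every label is at most `n` -/
  le_n : ∀ c, entry c ≤ n
  /-- every label in `1, …, n` appears in some cell -/
  exists_cell : ∀ k, 1 ≤ k → k ≤ n → ∃ c, entry c = k
  /-- each label appears in at most one cell -/
  inj : ∀ c c', entry c ≠ 0 → entry c = entry c' → c = c'
  /-- rows increase from left to right -/
  row_lt : ∀ i j, entry (i, j + 1) ≠ 0 → entry (i, j) < entry (i, j + 1)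
  /-- columns increase from top to bottom -/
  col_lt : ∀ i j, entry (i + 1, j) ≠ 0 → entry (i, j) < entry (i + 1, j)

/-- The shape (set of cells) of an entry function. -/
def shapeOf (f : ℕ × ℕ → ℕ) : Set (ℕ × ℕ) := {c | f c ≠ 0}

/-- The shape of a standard Young tableau: the set of cells of its
underlying Young diagram. -/
def SYT.shape {n : ℕ} (T : SYT n) : Set (ℕ × ℕ) := shapeOf T.entry

/-- `c` is an outer corner: a cell with no cell immediately to its right and
no cell immediately below it. -/
def IsOuterCorner (f : ℕ × ℕ → ℕ) (c : ℕ × ℕ) : Prop :=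
  f c ≠ 0 ∧ f (c.1, c.2 + 1) = 0 ∧ f (c.1 + 1, c.2) = 0

/-- Jeu de taquin sliding: starting with a vacant cell `c`, repeatedly slide
into the vacant cell the smaller of the entries immediately to the right of and
immediately below it, until neither exists.  `fuel` bounds the number of steps;
any `fuel ≥ n` suffices for a tableau with `n` entries, and extra fuel does not
change the result once the process has terminated. -/
def jdtAux : ℕ → (ℕ × ℕ → ℕ) → ℕ × ℕ → (ℕ × ℕ → ℕ)
  | 0, f, _ => f
  | fuel + 1, f, c =>
    let r := f (c.1, c.2 + 1)
    let b := f (c.1 + 1, c.2)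
    if r = 0 ∧ b = 0 then f
    else if b = 0 ∨ (r ≠ 0 ∧ r < b) then
      jdtAux fuel (Function.update (Function.update f c r) (c.1, c.2 + 1) 0) (c.1, c.2 + 1)
    else
      jdtAux fuel (Function.update (Function.update f c b) (c.1 + 1, c.2) 0) (c.1 + 1, c.2)

open Classical

/-- Deletion of the entry `m` from an entry function: vacate the cell
containing `m`, perform the jeu de taquin sliding process, and then renumber
each entry `p > m` to `p - 1`. -/
noncomputable def delRaw (fuel : ℕ) (f : ℕ × ℕ → ℕ) (m : ℕ) : ℕ × ℕ → ℕ :=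
  if h : 0 < m ∧ ∃ c, f c = m then
    let g := jdtAux fuel (Function.update f (Classical.choose h.2) 0) (Classical.choose h.2)
    fun x => if m < g x then g x - 1 else g x
  else f

/-- The 1-minor `T - m` of a standard Young tableau `T` with `n` entries,
as an entry function (a standard Young tableau with `n - 1` entries). -/
noncomputable def SYT.del {n : ℕ} (T : SYT n) (m : ℕ) : ℕ × ℕ → ℕ :=
  delRaw n T.entry m

/-- The set of 1-minors `M¹(T) = {T - m : 1 ≤ m ≤ n}` of `T`. -/
noncomputable def minors1 {n : ℕ} (T : SYT n) : Set (ℕ × ℕ → ℕ) :=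
  {g | ∃ m, 1 ≤ m ∧ m ≤ n ∧ g = T.del m}

/-- The multiset of 1-minors `⟦T - m : 1 ≤ m ≤ n⟧` of `T`,
counted with multiplicities. -/
noncomputable def minors1M {n : ℕ} (T : SYT n) : Multiset (ℕ × ℕ → ℕ) :=
  (Finset.Icc 1 n).val.map T.del

section Aux

lemma mem_shapeOf {f : ℕ × ℕ → ℕ} {x : ℕ × ℕ} : x ∈ shapeOf f ↔ f x ≠ 0 := Iff.rfl

lemma shapeOf_jdtAux (fuel : ℕ) (f : ℕ × ℕ → ℕ) (c : ℕ × ℕ) :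
    shapeOf (jdtAux fuel f c) ⊆ shapeOf f ∪ {c} := by
  induction fuel generalizing f c with
  | zero => exact Set.subset_union_left
  | succ k ih =>
    rw [jdtAux]
    split_ifs with h1 h2
    · exact Set.subset_union_left
    · have hr : f (c.1, c.2 + 1) ≠ 0 := by
        rcases h2 with h | h
        · exact fun h0 => h1 ⟨h0, h⟩
        · exact h.1
      refine (ih _ _).trans ?_
      intro x hx
      rcases hx with hx | hx
      · rw [mem_shapeOf, Function.update_apply, Function.update_apply] at hx
        split_ifs at hx with e1 e2
        · exact (hx rfl).elim
        · exact Or.inr (by simpa using e2)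
        · exact Or.inl hx
      · rw [Set.mem_singleton_iff] at hx
        subst hx
        exact Or.inl hr
    · have hb : f (c.1 + 1, c.2) ≠ 0 := by
        intro h0
        exact h2 (Or.inl h0)
      refine (ih _ _).trans ?_
      intro x hx
      rcases hx with hx | hx
      · rw [mem_shapeOf, Function.update_apply, Function.update_apply] at hx
        split_ifs at hx with e1 e2
        · exact (hx rfl).elim
        · exact Or.inr (by simpa using e2)
        · exact Or.inl hx
      · rw [Set.mem_singleton_iff] at hx
        subst hx
        exact Or.inl hb

lemma jdtAux_stop (fuel : ℕ) (f : ℕ × ℕ → ℕ) (c : ℕ × ℕ)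
    (hr : f (c.1, c.2 + 1) = 0) (hb : f (c.1 + 1, c.2) = 0) :
    jdtAux fuel f c = f := by
  cases fuel <;> simp [jdtAux, hr, hb]

end Aux
section Aux2

lemma SYT.image_shape {n : ℕ} (T : SYT n) : T.entry '' T.shape = Set.Icc 1 n := by
  ext k
  constructor
  · rintro ⟨c, hc, rfl⟩
    exact ⟨Nat.one_le_iff_ne_zero.2 hc, T.le_n c⟩
  · rintro ⟨h1, h2⟩
    obtain ⟨c, hc⟩ := T.exists_cell k h1 h2
    exact ⟨c, by simp only [SYT.shape, mem_shapeOf, hc]; omega, hc⟩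

lemma SYT.injOn_shape {n : ℕ} (T : SYT n) : Set.InjOn T.entry T.shape :=
  fun c hc c' _ he => T.inj c c' hc he

lemma SYT.shape_finite {n : ℕ} (T : SYT n) : T.shape.Finite :=
  Set.Finite.of_finite_image (T.image_shape ▸ Set.finite_Icc 1 n) T.injOn_shape

lemma SYT.shape_ncard {n : ℕ} (T : SYT n) : T.shape.ncard = n := by
  rw [← Set.ncard_image_of_injOn T.injOn_shape, T.image_shape, ← Finset.coe_Icc,
    Set.ncard_coe_finset]
  simp

lemma SYT.shape_down {n : ℕ} (T : SYT n) {x y : ℕ × ℕ} (hx : x ∈ T.shape)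
    (h1 : y.1 ≤ x.1) (h2 : y.2 ≤ x.2) : y ∈ T.shape :=
  T.diagram x.1 x.2 y.1 y.2 h1 h2 hx

lemma SYT.zero_mem {n : ℕ} (T : SYT n) (hn : 1 ≤ n) : ((0, 0) : ℕ × ℕ) ∈ T.shape := by
  obtain ⟨c, hc⟩ := T.exists_cell 1 le_rfl hn
  have : c ∈ T.shape := by simp [SYT.shape, mem_shapeOf, hc]
  exact T.shape_down this (Nat.zero_le _) (Nat.zero_le _)

lemma SYT.exists_corner_ge {n : ℕ} (T : SYT n) {x : ℕ × ℕ} (hx : x ∈ T.shape) :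
    ∃ c, IsOuterCorner T.entry c ∧ x.1 ≤ c.1 ∧ x.2 ≤ c.2 := by
  have hsfin : {y ∈ T.shape | x.1 ≤ y.1 ∧ x.2 ≤ y.2}.Finite :=
    T.shape_finite.subset (fun y hy => hy.1)
  have hsne : {y ∈ T.shape | x.1 ≤ y.1 ∧ x.2 ≤ y.2}.Nonempty := ⟨x, hx, le_refl _, le_refl _⟩
  obtain ⟨c, hcs, hmax⟩ : ∃ c ∈ {y ∈ T.shape | x.1 ≤ y.1 ∧ x.2 ≤ y.2}, ∀ a ∈ {y ∈ T.shape | x.1 ≤ y.1 ∧ x.2 ≤ y.2},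
      c.1 + c.2 ≤ a.1 + a.2 → c.1 + c.2 = a.1 + a.2 := by
    obtain ⟨c, hcs, hm⟩ := Set.exists_max_image _ (fun y : ℕ × ℕ => y.1 + y.2) hsfin hsne
    exact ⟨c, hcs, fun a ha hle => le_antisymm hle (hm a ha)⟩
  refine ⟨c, ⟨hcs.1, ?_, ?_⟩, hcs.2.1, hcs.2.2⟩
  · by_contra hne
    have hmem : ((c.1, c.2 + 1) : ℕ × ℕ) ∈ {y ∈ T.shape | x.1 ≤ y.1 ∧ x.2 ≤ y.2} :=
      ⟨hne, hcs.2.1, le_trans hcs.2.2 (Nat.le_succ _)⟩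
    have := hmax _ hmem (by simp)
    simp at this
  · by_contra hne
    have hmem : ((c.1 + 1, c.2) : ℕ × ℕ) ∈ {y ∈ T.shape | x.1 ≤ y.1 ∧ x.2 ≤ y.2} :=
      ⟨hne, le_trans hcs.2.1 (Nat.le_succ _), hcs.2.2⟩
    have := hmax _ hmem (by simp)
    simp at this

end Aux2
section Aux3

lemma SYT.del_shape_subset {n : ℕ} (T : SYT n) (m : ℕ) : shapeOf (T.del m) ⊆ T.shape := by
  unfold SYT.del delRaw
  split_ifs with h
  · set c0 := Classical.choose h.2 with hc0def
    have hc0 : T.entry c0 = m := Classical.choose_spec h.2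
    have hc0mem : c0 ∈ T.shape := by
      rw [SYT.shape, mem_shapeOf, hc0]; omega
    intro x hx
    rw [mem_shapeOf] at hx
    have hg : jdtAux n (Function.update T.entry c0 0) c0 x ≠ 0 := by
      by_cases hsplit : m < jdtAux n (Function.update T.entry c0 0) c0 x
      · omega
      · simpa [hsplit] using hx
    have hmem := shapeOf_jdtAux n (Function.update T.entry c0 0) c0 hg
    rcases hmem with hmem | hmem
    · rw [mem_shapeOf, Function.update_apply] at hmem
      split_ifs at hmem
      · exact (hmem rfl).elim
      · exact hmem
    · rw [Set.mem_singleton_iff] at hmem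
      subst hmem
      exact hc0mem
  · exact fun x hx => hx

lemma SYT.del_corner_shape {n : ℕ} (T : SYT n) {c : ℕ × ℕ}
    (hc : IsOuterCorner T.entry c) :
    shapeOf (T.del (T.entry c)) = T.shape \ {c} := by
  obtain ⟨h0, hr, hb⟩ := hc
  have hh : 0 < T.entry c ∧ ∃ c', T.entry c' = T.entry c := ⟨Nat.pos_of_ne_zero h0, c, rfl⟩
  have hc0 : Classical.choose hh.2 = c := by
    apply T.inj
    · rw [Classical.choose_spec hh.2]; exact h0
    · exact Classical.choose_spec hh.2
  rw [SYT.del, delRaw, dif_pos hh]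
  rw [hc0]
  have hstop : jdtAux n (Function.update T.entry c 0) c = Function.update T.entry c 0 := by
    apply jdtAux_stop
    · rw [Function.update_apply, if_neg (by simp [Prod.ext_iff])]
      exact hr
    · rw [Function.update_apply, if_neg (by simp [Prod.ext_iff])]
      exact hb
  simp only [hstop]
  ext x
  simp only [mem_shapeOf, Set.mem_diff, Set.mem_singleton_iff, SYT.shape]
  rw [Function.update_apply]
  by_cases hx : x = c
  · simp [hx]
  · rw [if_neg hx]
    have h1 : 1 ≤ T.entry c := Nat.one_le_iff_ne_zero.2 h0
    constructor
    · intro hne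
      split_ifs at hne with hlt
      · exact ⟨by omega, hx⟩
      · exact ⟨hne, hx⟩
    · rintro ⟨hne, -⟩
      split_ifs with hlt
      · omega
      · exact hne

lemma SYT.del_corner_mem {n : ℕ} (T : SYT n) {c : ℕ × ℕ} (hc : IsOuterCorner T.entry c) :
    T.del (T.entry c) ∈ minors1 T :=
  ⟨T.entry c, Nat.one_le_iff_ne_zero.2 hc.1, T.le_n c, rfl⟩

end Aux3
section Aux4

lemma rect_ncard (p q : ℕ) : ({x : ℕ × ℕ | x.1 ≤ p ∧ x.2 ≤ q}).ncard = (p + 1) * (q + 1) := by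
  have he : {x : ℕ × ℕ | x.1 ≤ p ∧ x.2 ≤ q} = ↑(Finset.Iic p ×ˢ Finset.Iic q) := by
    ext x
    simp [Finset.mem_product, Prod.le_def]
  rw [he, Set.ncard_coe_finset, Finset.card_product, Nat.card_Iic, Nat.card_Iic]

lemma rect_aux {p q p' q' n : ℕ} (hn : 3 ≤ n)
    (h1 : (p + 1) * (q + 1) = n) (h2 : (p' + 1) * (q' + 1) = n)
    (s1 : {x : ℕ × ℕ | x.1 ≤ p ∧ x.2 ≤ q} \ {(p, q)} ⊆ {x : ℕ × ℕ | x.1 ≤ p' ∧ x.2 ≤ q'})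
    (s2 : {x : ℕ × ℕ | x.1 ≤ p' ∧ x.2 ≤ q'} \ {(p', q')} ⊆ {x : ℕ × ℕ | x.1 ≤ p ∧ x.2 ≤ q}) :
    p = p' ∧ q = q' := by
  have S1 : ∀ a b : ℕ, a ≤ p → b ≤ q → (a, b) ≠ (p, q) → a ≤ p' ∧ b ≤ q' := by
    intro a b ha hb hne
    exact s1 ⟨⟨ha, hb⟩, hne⟩
  have S2 : ∀ a b : ℕ, a ≤ p' → b ≤ q' → (a, b) ≠ (p', q') → a ≤ p ∧ b ≤ q := by
    intro a b ha hb hne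
    exact s2 ⟨⟨ha, hb⟩, hne⟩
  rcases Nat.eq_zero_or_pos q with hq | hq
  · subst hq
    have hp : 2 ≤ p := by omega
    have hp' : 1 ≤ p' := by
      have := S1 (p - 1) 0 (by omega) le_rfl (by simp [Prod.ext_iff]; omega)
      omega
    have hq' : q' = 0 := by
      by_contra hq'
      have := S2 0 1 (by omega) (by omega) (by simp [Prod.ext_iff]; omega)
      omega
    subst hq'
    constructor
    · omega
    · rfl
  rcases Nat.eq_zero_or_pos p with hp | hp
  · subst hp
    have hq2 : 2 ≤ q := by omega
    have hq' : 1 ≤ q' := by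
      have := S1 0 (q - 1) le_rfl (by omega) (by simp [Prod.ext_iff]; omega)
      omega
    have hp' : p' = 0 := by
      by_contra hp'
      have := S2 1 0 (by omega) (by omega) (by simp [Prod.ext_iff]; omega)
      omega
    subst hp'
    constructor
    · rfl
    · omega
  · have hA := S1 p 0 le_rfl (by omega) (by simp [Prod.ext_iff]; omega)
    have hB := S1 0 q (by omega) le_rfl (by simp [Prod.ext_iff]; omega)
    have hp' : p ≤ p' := hA.1
    have hq' : q ≤ q' := hB.2
    constructor
    · by_contra hne
      have hlt : p + 1 < p' + 1 := by omega
      have : (p + 1) * (q + 1) < (p' + 1) * (q' + 1) :=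
        Nat.mul_lt_mul_of_lt_of_le hlt (by omega) (by omega)
      omega
    · by_contra hne
      have hlt : q + 1 < q' + 1 := by omega
      have : (p + 1) * (q + 1) < (p' + 1) * (q' + 1) :=
        Nat.mul_lt_mul_of_le_of_lt (by omega) hlt (by omega)
      omega

end Aux4
/-- The set of 1-minors of a standard Young tableau with at least 3 entries
determines the shape of the tableau. -/
theorem syt_set_of_one_minors_determines_shape
    (n : ℕ) (hn : 3 ≤ n) (S T : SYT n)
    (h : minors1 S = minors1 T) : S.shape = T.shape := by
  classical
  have hsub : ∀ A B : SYT n, minors1 A = minors1 B →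
      (∃ c1 c2, IsOuterCorner A.entry c1 ∧ IsOuterCorner A.entry c2 ∧ c1 ≠ c2) →
      A.shape ⊆ B.shape := by
    rintro A B hAB ⟨c1, c2, hc1, hc2, hne⟩ x hx
    have key : ∀ c : ℕ × ℕ, IsOuterCorner A.entry c → x ≠ c → x ∈ B.shape := by
      intro c hc hxc
      have hmem : A.del (A.entry c) ∈ minors1 B := hAB ▸ A.del_corner_mem hc
      obtain ⟨m', -, -, hm'⟩ := hmem
      have hx' : x ∈ shapeOf (A.del (A.entry c)) := by
        rw [A.del_corner_shape hc]
        exact ⟨hx, hxc⟩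
      rw [hm'] at hx'
      exact B.del_shape_subset m' hx'
    by_cases h1 : x = c1
    · exact key c2 hc2 (by rw [h1]; exact hne)
    · exact key c1 hc1 h1
  have hcard : ∀ A B : SYT n, A.shape ⊆ B.shape → A.shape = B.shape := fun A B hs =>
    Set.eq_of_subset_of_ncard_le hs (by rw [A.shape_ncard, B.shape_ncard]) B.shape_finite
  by_cases hS : ∃ c1 c2, IsOuterCorner S.entry c1 ∧ IsOuterCorner S.entry c2 ∧ c1 ≠ c2
  · exact hcard S T (hsub S T h hS)
  by_cases hT : ∃ c1 c2, IsOuterCorner T.entry c1 ∧ IsOuterCorner T.entry c2 ∧ c1 ≠ c2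
  · exact (hcard T S (hsub T S h.symm hT)).symm
  have hn1 : 1 ≤ n := by omega
  obtain ⟨cS, hcS, -, -⟩ := S.exists_corner_ge (S.zero_mem hn1)
  obtain ⟨cT, hcT, -, -⟩ := T.exists_corner_ge (T.zero_mem hn1)
  have huS : ∀ c, IsOuterCorner S.entry c → c = cS := by
    intro c hc
    by_contra hne
    exact hS ⟨c, cS, hc, hcS, hne⟩
  have huT : ∀ c, IsOuterCorner T.entry c → c = cT := by
    intro c hc
    by_contra hne
    exact hT ⟨c, cT, hc, hcT, hne⟩
  have hrS : S.shape = {x : ℕ × ℕ | x.1 ≤ cS.1 ∧ x.2 ≤ cS.2} := by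
    apply Set.Subset.antisymm
    · intro x hx
      obtain ⟨c, hc, h1, h2⟩ := S.exists_corner_ge hx
      rw [huS c hc] at h1 h2
      exact ⟨h1, h2⟩
    · intro x hx
      exact S.shape_down (show cS ∈ S.shape from hcS.1) hx.1 hx.2
  have hrT : T.shape = {x : ℕ × ℕ | x.1 ≤ cT.1 ∧ x.2 ≤ cT.2} := by
    apply Set.Subset.antisymm
    · intro x hx
      obtain ⟨c, hc, h1, h2⟩ := T.exists_corner_ge hx
      rw [huT c hc] at h1 h2
      exact ⟨h1, h2⟩
    · intro x hx
      exact T.shape_down (show cT ∈ T.shape from hcT.1) hx.1 hx.2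
  have hcardS : (cS.1 + 1) * (cS.2 + 1) = n := by
    have hc := S.shape_ncard
    rw [hrS, rect_ncard] at hc
    exact hc
  have hcardT : (cT.1 + 1) * (cT.2 + 1) = n := by
    have hc := T.shape_ncard
    rw [hrT, rect_ncard] at hc
    exact hc
  have hsub1 : S.shape \ {cS} ⊆ T.shape := by
    intro x hx
    have hmem : S.del (S.entry cS) ∈ minors1 T := h ▸ S.del_corner_mem hcS
    obtain ⟨m', -, -, hm'⟩ := hmem
    have hx' : x ∈ shapeOf (S.del (S.entry cS)) := by
      rw [S.del_corner_shape hcS]; exact hx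
    rw [hm'] at hx'
    exact T.del_shape_subset m' hx'
  have hsub2 : T.shape \ {cT} ⊆ S.shape := by
    intro x hx
    have hmem : T.del (T.entry cT) ∈ minors1 S := h ▸ T.del_corner_mem hcT
    obtain ⟨m', -, -, hm'⟩ := hmem
    have hx' : x ∈ shapeOf (T.del (T.entry cT)) := by
      rw [T.del_corner_shape hcT]; exact hx
    rw [hm'] at hx'
    exact S.del_shape_subset m' hx'
  have s1 : {x : ℕ × ℕ | x.1 ≤ cS.1 ∧ x.2 ≤ cS.2} \ {(cS.1, cS.2)} ⊆
      {x : ℕ × ℕ | x.1 ≤ cT.1 ∧ x.2 ≤ cT.2} := by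
    rw [Prod.mk.eta, ← hrS, ← hrT]
    exact hsub1
  have s2 : {x : ℕ × ℕ | x.1 ≤ cT.1 ∧ x.2 ≤ cT.2} \ {(cT.1, cT.2)} ⊆
      {x : ℕ × ℕ | x.1 ≤ cS.1 ∧ x.2 ≤ cS.2} := by
    rw [Prod.mk.eta, ← hrT, ← hrS]
    exact hsub2
  obtain ⟨e1, e2⟩ := rect_aux hn hcardS hcardT s1 s2
  rw [hrS, hrT, e1, e2]
end

section
/- Let n ≥ 4 and let S and T be standard Young tableaux with n entries. If the set of 1-minors of S equals the set of 1-minors of T, then the cell (row index and column index) containing the entry n in S is the same as the cell containing the entry n in T. (The set of 1-minors of a tableau with at least 4 entries determines the location of the largest entry.) -/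
open Classical

section JDT

abbrev Cell := ℕ × ℕ

/-- One-step unfolding of `jdtAux`. -/
lemma jdtAux_succ (fuel : ℕ) (f : Cell → ℕ) (c : Cell) :
    jdtAux (fuel + 1) f c =
      if f (c.1, c.2 + 1) = 0 ∧ f (c.1 + 1, c.2) = 0 then f
      else if f (c.1 + 1, c.2) = 0 ∨ (f (c.1, c.2 + 1) ≠ 0 ∧ f (c.1, c.2 + 1) < f (c.1 + 1, c.2)) then
        jdtAux fuel (Function.update (Function.update f c (f (c.1, c.2 + 1))) (c.1, c.2 + 1) 0) (c.1, c.2 + 1)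
      else
        jdtAux fuel (Function.update (Function.update f c (f (c.1 + 1, c.2))) (c.1 + 1, c.2) 0) (c.1 + 1, c.2) := rfl

lemma jdt_stop (fuel : ℕ) (f : Cell → ℕ) (c : Cell)
    (h1 : f (c.1, c.2 + 1) = 0) (h2 : f (c.1 + 1, c.2) = 0) :
    jdtAux fuel f c = f := by
  cases fuel with
  | zero => rfl
  | succ fuel => rw [jdtAux_succ, if_pos ⟨h1, h2⟩]

/-- Support characterization: the slide vacates exactly one cell `e`,
weakly to the lower right of the starting vacancy. -/
lemma jdt_supp : ∀ (fuel : ℕ) (f : Cell → ℕ) (v : Cell), f v = 0 →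
    ∃ e : Cell, v.1 ≤ e.1 ∧ v.2 ≤ e.2 ∧
      ∀ x, (jdtAux fuel f v x = 0 ↔ ((f x = 0 ∧ x ≠ v) ∨ x = e)) := by
  intro fuel
  induction fuel with
  | zero =>
    intro f v hv
    refine ⟨v, le_refl _, le_refl _, fun x => ?_⟩
    show f x = 0 ↔ _
    constructor
    · intro hx
      by_cases hxv : x = v
      · exact Or.inr hxv
      · exact Or.inl ⟨hx, hxv⟩
    · rintro (⟨hx, _⟩ | rfl) <;> [exact hx; exact hv]
  | succ fuel ih =>
    intro f v hv
    have key : ∀ u : Cell, f u ≠ 0 → v.1 ≤ u.1 → v.2 ≤ u.2 →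
        ∃ e : Cell, v.1 ≤ e.1 ∧ v.2 ≤ e.2 ∧
          ∀ x, (jdtAux fuel (Function.update (Function.update f v (f u)) u 0) u x = 0 ↔
            ((f x = 0 ∧ x ≠ v) ∨ x = e)) := by
      intro u hfu hu1 hu2
      have huv : u ≠ v := fun h => hfu (h ▸ hv)
      set f' : Cell → ℕ := Function.update (Function.update f v (f u)) u 0 with hf'
      have hf'u : f' u = 0 := by simp [hf']
      have hf'v : f' v = f u := by
        rw [hf', Function.update_of_ne (Ne.symm huv), Function.update_self]
      have hval : ∀ x, x ≠ u → x ≠ v → f' x = f x := by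
        intro x hxu hxv
        rw [hf', Function.update_of_ne hxu, Function.update_of_ne hxv]
      obtain ⟨e, he1, he2, he⟩ := ih f' u hf'u
      refine ⟨e, le_trans hu1 he1, le_trans hu2 he2, fun x => ?_⟩
      rw [he x]
      constructor
      · rintro (⟨hx, hxu⟩ | rfl)
        · by_cases hxv : x = v
          · exfalso; rw [hxv, hf'v] at hx; exact hfu hx
          · exact Or.inl ⟨by rw [← hval x hxu hxv]; exact hx, hxv⟩
        · exact Or.inr rfl
      · rintro (⟨hx, hxv⟩ | rfl)
        · have hxu : x ≠ u := fun h => hfu (h ▸ hx)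
          exact Or.inl ⟨by rw [hval x hxu hxv]; exact hx, hxu⟩
        · exact Or.inr rfl
    rw [jdtAux_succ]
    by_cases h1 : f (v.1, v.2 + 1) = 0 ∧ f (v.1 + 1, v.2) = 0
    · rw [if_pos h1]
      refine ⟨v, le_refl _, le_refl _, fun x => ?_⟩
      constructor
      · intro hx
        by_cases hxv : x = v
        · exact Or.inr hxv
        · exact Or.inl ⟨hx, hxv⟩
      · rintro (⟨hx, _⟩ | rfl) <;> [exact hx; exact hv]
    · rw [if_neg h1]
      by_cases h2 : f (v.1 + 1, v.2) = 0 ∨ (f (v.1, v.2 + 1) ≠ 0 ∧ f (v.1, v.2 + 1) < f (v.1 + 1, v.2))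
      · rw [if_pos h2]
        have hfu : f (v.1, v.2 + 1) ≠ 0 := by
          rcases h2 with h2 | h2
          · intro h; exact h1 ⟨h, h2⟩
          · exact h2.1
        exact key (v.1, v.2 + 1) hfu (le_refl _) (Nat.le_succ _)
      · rw [if_neg h2]
        have hfu : f (v.1 + 1, v.2) ≠ 0 := by
          intro h; exact h2 (Or.inl h)
        exact key (v.1 + 1, v.2) hfu (Nat.le_succ _) (le_refl _)

/-- Corner-value tracking: a value sitting at an outer corner either stays
or the corner is vacated. -/
lemma jdt_corner : ∀ (fuel : ℕ) (f : Cell → ℕ) (v z : Cell) (t : ℕ), t ≠ 0 →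
    f v = 0 → f (z.1, z.2 + 1) = 0 → f (z.1 + 1, z.2) = 0 →
    v ≠ (z.1, z.2 + 1) → v ≠ (z.1 + 1, z.2) →
    (f z = t ∨ (f z = 0 ∧ v = z)) →
    (jdtAux fuel f v z = t ∨ jdtAux fuel f v z = 0) := by
  intro fuel
  induction fuel with
  | zero =>
    intro f v z t ht hv hzr hzb _ _ hinv
    rcases hinv with h | h
    · exact Or.inl h
    · exact Or.inr h.1
  | succ fuel ih =>
    intro f v z t ht hv hzr hzb hvr hvb hinv
    rw [jdtAux_succ]
    by_cases h1 : f (v.1, v.2 + 1) = 0 ∧ f (v.1 + 1, v.2) = 0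
    · rw [if_pos h1]
      rcases hinv with h | h
      · exact Or.inl h
      · exact Or.inr h.1
    · have hterm : ¬ (f z = 0 ∧ v = z) := by
        rintro ⟨hz0, rfl⟩
        exact h1 ⟨hzr, hzb⟩
      have hfz : f z = t := by tauto
      have key : ∀ u : Cell, f u ≠ 0 → u ≠ v →
          (jdtAux fuel (Function.update (Function.update f v (f u)) u 0) u z = t ∨
           jdtAux fuel (Function.update (Function.update f v (f u)) u 0) u z = 0) := by
        intro u hfu huv
        set f' : Cell → ℕ := Function.update (Function.update f v (f u)) u 0 with hf'
        have hf'u : f' u = 0 := by simp [hf']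
        have hval : ∀ x, x ≠ u → x ≠ v → f' x = f x := by
          intro x hxu hxv
          rw [hf', Function.update_of_ne hxu, Function.update_of_ne hxv]
        have hzru : (z.1, z.2 + 1) ≠ u := fun h => hfu (h ▸ hzr)
        have hzbu : (z.1 + 1, z.2) ≠ u := fun h => hfu (h ▸ hzb)
        have hf'zr : f' (z.1, z.2 + 1) = 0 := by
          rw [hval _ hzru (Ne.symm hvr)]; exact hzr
        have hf'zb : f' (z.1 + 1, z.2) = 0 := by
          rw [hval _ hzbu (Ne.symm hvb)]; exact hzb
        have hur : u ≠ (z.1, z.2 + 1) := Ne.symm hzru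
        have hub : u ≠ (z.1 + 1, z.2) := Ne.symm hzbu
        by_cases huz : u = z
        · -- the corner value moves out: new state has f' z = 0, vacancy z
          apply ih f' u z t ht hf'u hf'zr hf'zb hur hub
          exact Or.inr ⟨huz ▸ hf'u, huz⟩
        · apply ih f' u z t ht hf'u hf'zr hf'zb hur hub
          refine Or.inl ?_
          have hzv : z ≠ v := by
            intro h
            rw [h, hv] at hfz
            exact ht hfz.symm
          rw [hval z (fun h => huz h.symm) hzv]
          exact hfz
      rw [if_neg h1]
      by_cases h2 : f (v.1 + 1, v.2) = 0 ∨ (f (v.1, v.2 + 1) ≠ 0 ∧ f (v.1, v.2 + 1) < f (v.1 + 1, v.2))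
      · rw [if_pos h2]
        have hfu : f (v.1, v.2 + 1) ≠ 0 := by
          rcases h2 with h2 | h2
          · intro h; exact h1 ⟨h, h2⟩
          · exact h2.1
        exact key (v.1, v.2 + 1) hfu (fun h => by simpa using congrArg Prod.snd h)
      · rw [if_neg h2]
        have hfu : f (v.1 + 1, v.2) ≠ 0 := by
          intro h; exact h2 (Or.inl h)
        exact key (v.1 + 1, v.2) hfu (fun h => by simpa using congrArg Prod.fst h)

end JDT
section DEL

lemma del_repr {n : ℕ} (S : SYT n) (m : ℕ) (w : Cell) (hm0 : 0 < m) (hw : S.entry w = m) :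
    ∀ x, S.del m x =
      (if m < jdtAux n (Function.update S.entry w 0) w x
        then jdtAux n (Function.update S.entry w 0) w x - 1
        else jdtAux n (Function.update S.entry w 0) w x) := by
  have h : 0 < m ∧ ∃ c, S.entry c = m := ⟨hm0, ⟨w, hw⟩⟩
  have hcw : Classical.choose h.2 = w := by
    apply S.inj
    · rw [Classical.choose_spec h.2]; omega
    · rw [Classical.choose_spec h.2, hw]
  intro x
  show delRaw n S.entry m x = _
  unfold delRaw
  rw [dif_pos h, hcw]

lemma del_zero_iff {n : ℕ} (S : SYT n) (m : ℕ) (w : Cell) (hm0 : 0 < m) (hw : S.entry w = m) :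
    ∃ e : Cell, w.1 ≤ e.1 ∧ w.2 ≤ e.2 ∧
      ∀ x, (S.del m x = 0 ↔ (S.entry x = 0 ∨ x = e)) := by
  obtain ⟨e, h1, h2, he⟩ := jdt_supp n (Function.update S.entry w 0) w (Function.update_self _ _ _)
  refine ⟨e, h1, h2, fun x => ?_⟩
  rw [del_repr S m w hm0 hw x]
  have hzero : (if m < jdtAux n (Function.update S.entry w 0) w x
        then jdtAux n (Function.update S.entry w 0) w x - 1
        else jdtAux n (Function.update S.entry w 0) w x) = 0 ↔
      jdtAux n (Function.update S.entry w 0) w x = 0 := by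
    split_ifs with hlt
    · omega
    · exact Iff.rfl
  rw [hzero, he x]
  have hupd : ∀ y : Cell, (Function.update S.entry w 0 y = 0 ↔ (S.entry y = 0 ∨ y = w)) := by
    intro y
    by_cases hyw : y = w
    · subst hyw; simp
    · rw [Function.update_of_ne hyw]; simp [hyw]
  constructor
  · rintro (⟨hy, hyw⟩ | rfl)
    · rcases (hupd x).1 hy with h | h
      · exact Or.inl h
      · exact absurd h hyw
    · exact Or.inr rfl
  · rintro (hy | rfl)
    · by_cases hxw : x = w
      · subst hxw; rw [hw] at hy; omega
      · exact Or.inl ⟨(hupd x).2 (Or.inl hy), hxw⟩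
    · exact Or.inr rfl

lemma del_corner_val {n : ℕ} (S : SYT n) (m : ℕ) (w z : Cell) (t : ℕ)
    (hm0 : 0 < m) (hw : S.entry w = m) (ht : t ≠ 0) (hmt : m ≠ t)
    (hz : S.entry z = t)
    (hzr : S.entry (z.1, z.2 + 1) = 0) (hzb : S.entry (z.1 + 1, z.2) = 0) :
    S.del m z = (if m < t then t - 1 else t) ∨ S.del m z = 0 := by
  have hwr : w ≠ (z.1, z.2 + 1) := by
    intro hwy; rw [hwy, hzr] at hw; omega
  have hwb : w ≠ (z.1 + 1, z.2) := by
    intro hwy; rw [hwy, hzb] at hw; omega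
  have hzw : z ≠ w := by
    intro hzw; rw [← hzw, hz] at hw; exact hmt hw.symm
  have hcv := jdt_corner n (Function.update S.entry w 0) w z t ht
    (Function.update_self _ _ _)
    (by rw [Function.update_of_ne (Ne.symm hwr)]; exact hzr)
    (by rw [Function.update_of_ne (Ne.symm hwb)]; exact hzb)
    hwr hwb
    (Or.inl (by rw [Function.update_of_ne hzw]; exact hz))
  rw [del_repr S m w hm0 hw z]
  rcases hcv with hcv | hcv
  · rw [hcv]; exact Or.inl rfl
  · rw [hcv]; right; simp

lemma corner_of_entry_max {n : ℕ} (S : SYT n) (c : Cell) (hc : S.entry c = n) :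
    S.entry (c.1, c.2 + 1) = 0 ∧ S.entry (c.1 + 1, c.2) = 0 := by
  constructor
  · by_contra hne
    have h1 := S.row_lt c.1 c.2 hne
    have h2 := S.le_n (c.1, c.2 + 1)
    rw [Prod.mk.eta, hc] at h1
    omega
  · by_contra hne
    have h1 := S.col_lt c.1 c.2 hne
    have h2 := S.le_n (c.1 + 1, c.2)
    rw [Prod.mk.eta, hc] at h1
    omega

lemma del_top {n : ℕ} (S : SYT n) (c : Cell) (hn0 : 0 < n) (hc : S.entry c = n) :
    ∀ x, S.del n x = Function.update S.entry c 0 x := by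
  obtain ⟨hr, hb⟩ := corner_of_entry_max S c hc
  have hcr : c ≠ (c.1, c.2 + 1) := fun h => by simpa using congrArg Prod.snd h
  have hcb : c ≠ (c.1 + 1, c.2) := fun h => by simpa using congrArg Prod.fst h
  have hstop : jdtAux n (Function.update S.entry c 0) c = Function.update S.entry c 0 :=
    jdt_stop n _ c
      (by rw [Function.update_of_ne (Ne.symm hcr)]; exact hr)
      (by rw [Function.update_of_ne (Ne.symm hcb)]; exact hb)
  intro x
  rw [del_repr S n c hn0 hc x, hstop]
  have : Function.update S.entry c 0 x ≤ n := by
    by_cases hxc : x = c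
    · subst hxc; simp
    · rw [Function.update_of_ne hxc]; exact S.le_n x
  rw [if_neg (by omega)]

lemma del_at_max {n : ℕ} (S : SYT n) (c : Cell) (m : ℕ)
    (hc : S.entry c = n) (hm1 : 1 ≤ m) (hm2 : m ≤ n) :
    S.del m c = 0 ∨ S.del m c = n - 1 := by
  rcases eq_or_lt_of_le hm2 with rfl | hlt
  · left
    rw [del_top S c (by omega) hc c, Function.update_self]
  · obtain ⟨w, hw⟩ := S.exists_cell m hm1 hm2
    obtain ⟨hr, hb⟩ := corner_of_entry_max S c hc
    have := del_corner_val S m w c n (by omega) hw (by omega) (by omega) hc hr hb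
    rcases this with h | h
    · right; rw [h, if_pos hlt]
    · left; exact h

end DEL
section GEOM

/-- A standard Young tableau with at least 4 entries cannot have its shape
contained in three cells. -/
lemma not_shape_subset_three {n : ℕ} (S : SYT n) (hn : 4 ≤ n) (a b c : Cell)
    (hsub : ∀ x : Cell, S.entry x ≠ 0 → (x = a ∨ x = b ∨ x = c)) : False := by
  obtain ⟨w1, hw1⟩ := S.exists_cell 1 (by omega) (by omega)
  obtain ⟨w2, hw2⟩ := S.exists_cell 2 (by omega) (by omega)
  obtain ⟨w3, hw3⟩ := S.exists_cell 3 (by omega) (by omega)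
  obtain ⟨w4, hw4⟩ := S.exists_cell 4 (by omega) (by omega)
  have hne : ∀ (y z : Cell) (p q : ℕ), S.entry y = p → S.entry z = q → p ≠ q → p ≠ 0 → y ≠ z := by
    intro y z p q hy hz hpq hp0 hyz
    subst hyz
    rw [hy] at hz
    exact hpq hz
  have h12 := hne w1 w2 1 2 hw1 hw2 (by omega) (by omega)
  have h13 := hne w1 w3 1 3 hw1 hw3 (by omega) (by omega)
  have h14 := hne w1 w4 1 4 hw1 hw4 (by omega) (by omega)
  have h23 := hne w2 w3 2 3 hw2 hw3 (by omega) (by omega)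
  have h24 := hne w2 w4 2 4 hw2 hw4 (by omega) (by omega)
  have h34 := hne w3 w4 3 4 hw3 hw4 (by omega) (by omega)
  have m1 := hsub w1 (by omega)
  have m2 := hsub w2 (by omega)
  have m3 := hsub w3 (by omega)
  have m4 := hsub w4 (by omega)
  rcases m1 with rfl | rfl | rfl <;> rcases m2 with rfl | rfl | rfl <;>
    rcases m3 with rfl | rfl | rfl <;> rcases m4 with rfl | rfl | rfl <;>
    simp_all

/-- Geometric endgame for the case where all shapes are rectangles. -/
lemma rect_small {n : ℕ} (S : SYT n) (hn : 4 ≤ n) (c c' : Cell)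
    (hcs : ∀ x : Cell, S.entry x ≠ 0 ↔ (x.1 ≤ c.1 ∧ x.2 ≤ c.2))
    (key2 : ∀ x : Cell, ((x.1 ≤ c.1 ∧ x.2 ≤ c.2) ∧ x ≠ c) ↔
        ((x.1 ≤ c'.1 ∧ x.2 ≤ c'.2) ∧ x ≠ c'))
    (h1 : c.1 < c'.1) (h2 : c'.2 < c.2) : False := by
  -- c'.2 = 0
  have hc'2 : c'.2 = 0 := by
    by_contra hne
    have := ((key2 (c'.1, 0)).2 ⟨⟨le_refl _, Nat.zero_le _⟩,
      fun h => hne (congrArg Prod.snd h).symm⟩).1.1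
    omega
  -- c.1 = 0
  have hc1 : c.1 = 0 := by
    by_contra hne
    have := ((key2 (0, c.2)).1 ⟨⟨Nat.zero_le _, le_refl _⟩,
      fun h => hne (congrArg Prod.fst h).symm⟩).1.2
    omega
  -- c.2 = 1
  have hc2 : c.2 = 1 := by
    by_contra hne
    have h21 : (1 : ℕ) ≤ c.2 := by omega
    have := ((key2 (0, 1)).1 ⟨⟨by omega, h21⟩,
      fun h => hne (congrArg Prod.snd h).symm⟩).1.2
    omega
  -- c'.1 = 1
  have hc'1 : c'.1 = 1 := by
    by_contra hne
    have h11 : (1 : ℕ) ≤ c'.1 := by omega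
    have := ((key2 (1, 0)).2 ⟨⟨h11, by omega⟩,
      fun h => hne (congrArg Prod.fst h).symm⟩).1.1
    omega
  refine not_shape_subset_three S hn (0, 0) (0, 1) (1, 1) (fun x hx => ?_)
  have hb := (hcs x).1 hx
  have hx1 : x.1 = 0 := by omega
  have hx2 : x.2 = 0 ∨ x.2 = 1 := by omega
  rcases hx2 with hx2 | hx2
  · left; ext <;> simp [hx1, hx2]
  · right; left; ext <;> simp [hx1, hx2]

/-- Geometric endgame for the swap case. -/
lemma geom_small {n : ℕ} (S : SYT n) (hn : 4 ≤ n) (c c' : Cell)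
    (hlc : S.entry c ≠ 0) (hlc' : S.entry c' ≠ 0)
    (hmost : ∀ z : Cell, S.entry z ≠ 0 → z ≠ c → z ≠ c' →
      ((z.1 ≤ c.1 ∧ z.2 ≤ c.2) ∧ (z.1 ≤ c'.1 ∧ z.2 ≤ c'.2)))
    (h1 : c.1 < c'.1) (h2 : c'.2 < c.2) : False := by
  have hdiag : ∀ (y : Cell) (i j : ℕ), S.entry y ≠ 0 → i ≤ y.1 → j ≤ y.2 →
      S.entry (i, j) ≠ 0 := by
    intro y i j hy hi hj
    refine S.diagram y.1 y.2 i j hi hj ?_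
    rw [Prod.mk.eta]; exact hy
  -- c.2 = c'.2 + 1
  have hee : c.2 = c'.2 + 1 := by
    have hz : S.entry (c.1, c.2 - 1) ≠ 0 := hdiag c _ _ hlc (le_refl _) (by omega)
    have hzc : (c.1, c.2 - 1) ≠ c := by
      intro h; have := congrArg Prod.snd h; simp at this; omega
    have hzc' : (c.1, c.2 - 1) ≠ c' := by
      intro h; have := congrArg Prod.fst h; simp at this; omega
    have := (hmost _ hz hzc hzc').2.2
    simp at this
    omega
  -- c.1 = 0
  have hc1 : c.1 = 0 := by
    by_contra hne
    have hz : S.entry (c.1 - 1, c.2) ≠ 0 := hdiag c _ _ hlc (by omega) (le_refl _)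
    have hzc : (c.1 - 1, c.2) ≠ c := by
      intro h; have := congrArg Prod.fst h; simp at this; omega
    have hzc' : (c.1 - 1, c.2) ≠ c' := by
      intro h; have := congrArg Prod.fst h; simp at this; omega
    have := (hmost _ hz hzc hzc').2.2
    simp at this
    omega
  -- c'.2 = 0
  have hc'2 : c'.2 = 0 := by
    by_contra hne
    have hz : S.entry (c'.1, 0) ≠ 0 := hdiag c' _ _ hlc' (le_refl _) (by omega)
    have hzc : (c'.1, 0) ≠ c := by
      intro h; have := congrArg Prod.fst h; simp at this; omega
    have hzc' : (c'.1, 0) ≠ c' := by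
      intro h; have := congrArg Prod.snd h; simp at this; omega
    have := (hmost _ hz hzc hzc').1.1
    simp at this
    omega
  -- c'.1 = 1
  have hc'1 : c'.1 = 1 := by
    by_contra hne
    have hz : S.entry (c'.1 - 1, 0) ≠ 0 := hdiag c' _ _ hlc' (by omega) (by omega)
    have hzc : (c'.1 - 1, 0) ≠ c := by
      intro h; have := congrArg Prod.fst h; simp at this; omega
    have hzc' : (c'.1 - 1, 0) ≠ c' := by
      intro h; have := congrArg Prod.fst h; simp at this; omega
    have := (hmost _ hz hzc hzc').1.1
    simp at this
    omega
  refine not_shape_subset_three S hn c c' (0, 0) (fun x hx => ?_)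
  by_cases hxc : x = c
  · exact Or.inl hxc
  by_cases hxc' : x = c'
  · exact Or.inr (Or.inl hxc')
  have := hmost x hx hxc hxc'
  right; right
  have hx1 : x.1 = 0 := by omega
  have hx2 : x.2 = 0 := by omega
  exact Prod.ext_iff.2 ⟨hx1, hx2⟩

end GEOM
section MAIN

lemma del_top_transfer {n : ℕ} (S T : SYT n) (c : Cell) (hn : 0 < n)
    (hc : S.entry c = n) (hM : minors1 S = minors1 T) :
    ∃ e : Cell, ∀ x : Cell, ((S.entry x = 0 ∨ x = c) ↔ (T.entry x = 0 ∨ x = e)) := by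
  have hmem : S.del n ∈ minors1 T := by
    rw [← hM]; exact ⟨n, by omega, le_refl n, rfl⟩
  obtain ⟨m', hm1, hm2, heq⟩ := hmem
  obtain ⟨w', hw'⟩ := T.exists_cell m' hm1 hm2
  obtain ⟨e, _, _, he⟩ := del_zero_iff T m' w' (by omega) hw'
  refine ⟨e, fun x => ?_⟩
  have h0 : S.del n x = 0 ↔ (S.entry x = 0 ∨ x = c) := by
    rw [del_top S c hn hc x]
    by_cases hxc : x = c
    · subst hxc; simp
    · rw [Function.update_of_ne hxc]; simp [hxc]
  rw [← h0, ← he x, heq]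

lemma case_IIb {n : ℕ} (hn : 4 ≤ n) (S T : SYT n) (c c' : Cell)
    (hc : S.entry c = n) (hc' : T.entry c' = n)
    (hM : minors1 S = minors1 T) (hcc : c ≠ c')
    (hTc : T.entry c ≠ 0) (hSc' : S.entry c' = 0) : False := by
  obtain ⟨e, key⟩ := del_top_transfer S T c (by omega) hc hM
  have he : e = c' := by
    rcases (key c').1 (Or.inl hSc') with h | h
    · rw [hc'] at h; omega
    · exact h.symm
  subst he
  rcases (key c).1 (Or.inr rfl) with h | h
  · exact hTc h
  · exact hcc h

lemma case_I {n : ℕ} (hn : 4 ≤ n) (S T : SYT n) (c c' : Cell)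
    (hc : S.entry c = n) (hc' : T.entry c' = n)
    (hM : minors1 S = minors1 T) (hcc : c ≠ c')
    (hTc : T.entry c = 0) (hSc' : S.entry c' = 0) : False := by
  obtain ⟨e, key⟩ := del_top_transfer S T c (by omega) hc hM
  have he : e = c' := by
    rcases (key c').1 (Or.inl hSc') with h | h
    · rw [hc'] at h; omega
    · exact h.symm
  rw [he] at key
  -- every cell of `S` lies weakly above-left of `c`
  have hSle : ∀ (m : ℕ) (w : Cell), 1 ≤ m → m ≤ n → S.entry w = m →
      (w.1 ≤ c.1 ∧ w.2 ≤ c.2) := by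
    intro m w hm1 hm2 hw
    have hmem : S.del m ∈ minors1 T := by
      rw [← hM]; exact ⟨m, hm1, hm2, rfl⟩
    obtain ⟨m', hm1', hm2', heq⟩ := hmem
    obtain ⟨w', hw'⟩ := T.exists_cell m' hm1' hm2'
    obtain ⟨e', _, _, he'⟩ := del_zero_iff T m' w' (by omega) hw'
    have hg0 : S.del m c = 0 := by rw [heq]; exact (he' c).2 (Or.inl hTc)
    obtain ⟨e2, hle1, hle2, he2⟩ := del_zero_iff S m w (by omega) hw
    rcases (he2 c).1 hg0 with h | h
    · rw [hc] at h; omega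
    · rw [← h] at hle1 hle2; exact ⟨hle1, hle2⟩
  have hTle : ∀ (m : ℕ) (w : Cell), 1 ≤ m → m ≤ n → T.entry w = m →
      (w.1 ≤ c'.1 ∧ w.2 ≤ c'.2) := by
    intro m w hm1 hm2 hw
    have hmem : T.del m ∈ minors1 S := by
      rw [hM]; exact ⟨m, hm1, hm2, rfl⟩
    obtain ⟨m', hm1', hm2', heq⟩ := hmem
    obtain ⟨w', hw'⟩ := S.exists_cell m' hm1' hm2'
    obtain ⟨e', _, _, he'⟩ := del_zero_iff S m' w' (by omega) hw'
    have hg0 : T.del m c' = 0 := by rw [heq]; exact (he' c').2 (Or.inl hSc')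
    obtain ⟨e2, hle1, hle2, he2⟩ := del_zero_iff T m w (by omega) hw
    rcases (he2 c').1 hg0 with h | h
    · rw [hc'] at h; omega
    · rw [← h] at hle1 hle2; exact ⟨hle1, hle2⟩
  have hcs : ∀ x : Cell, S.entry x ≠ 0 ↔ (x.1 ≤ c.1 ∧ x.2 ≤ c.2) := by
    intro x
    constructor
    · intro hx
      exact hSle (S.entry x) x (by omega) (S.le_n x) rfl
    · rintro ⟨h1, h2⟩
      have := S.diagram c.1 c.2 x.1 x.2 h1 h2
        (by rw [Prod.mk.eta, hc]; omega)
      rw [Prod.mk.eta] at this; exact this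
  have hct : ∀ x : Cell, T.entry x ≠ 0 ↔ (x.1 ≤ c'.1 ∧ x.2 ≤ c'.2) := by
    intro x
    constructor
    · intro hx
      exact hTle (T.entry x) x (by omega) (T.le_n x) rfl
    · rintro ⟨h1, h2⟩
      have := T.diagram c'.1 c'.2 x.1 x.2 h1 h2
        (by rw [Prod.mk.eta, hc']; omega)
      rw [Prod.mk.eta] at this; exact this
  have key2 : ∀ x : Cell, ((x.1 ≤ c.1 ∧ x.2 ≤ c.2) ∧ x ≠ c) ↔
      ((x.1 ≤ c'.1 ∧ x.2 ≤ c'.2) ∧ x ≠ c') := by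
    intro x
    constructor
    · rintro ⟨h1, h2⟩
      have hSx : S.entry x ≠ 0 := (hcs x).2 h1
      have hnot : ¬(T.entry x = 0 ∨ x = c') := by
        intro hty
        rcases (key x).2 hty with h | h
        · exact hSx h
        · exact h2 h
      push_neg at hnot
      exact ⟨(hct x).1 hnot.1, hnot.2⟩
    · rintro ⟨h1, h2⟩
      have hTx : T.entry x ≠ 0 := (hct x).2 h1
      have hnot : ¬(S.entry x = 0 ∨ x = c) := by
        intro hty
        rcases (key x).1 hty with h | h
        · exact hTx h
        · exact h2 h
      push_neg at hnot
      exact ⟨(hcs x).1 hnot.1, hnot.2⟩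
  have hnc1 : ¬(c.1 ≤ c'.1 ∧ c.2 ≤ c'.2) := by
    rintro ⟨h1, h2⟩
    exact ((key2 c).2 ⟨⟨h1, h2⟩, hcc⟩).2 rfl
  have hnc2 : ¬(c'.1 ≤ c.1 ∧ c'.2 ≤ c.2) := by
    rintro ⟨h1, h2⟩
    exact ((key2 c').1 ⟨⟨h1, h2⟩, Ne.symm hcc⟩).2 rfl
  push_neg at hnc1 hnc2
  rcases Nat.lt_or_ge c.1 c'.1 with hb | hb
  · exact rect_small S hn c c' hcs key2 hb (by omega)
  · have hb2 : c'.1 < c.1 ∨ c.1 = c'.1 := by omega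
    have hcb : c'.1 < c.1 := by
      rcases hb2 with h | h
      · exact h
      · exfalso
        have h2 := hnc1 (le_of_eq h)
        have h3 := hnc2 (le_of_eq h.symm)
        omega
    exact rect_small T hn c' c hct (fun x => (key2 x).symm) hcb (by omega)

end MAIN
section IIA

lemma case_IIa {n : ℕ} (hn : 4 ≤ n) (S T : SYT n) (c c' : Cell)
    (hc : S.entry c = n) (hc' : T.entry c' = n)
    (hM : minors1 S = minors1 T) (hcc : c ≠ c')
    (hTc : T.entry c = n - 1) (hSc' : S.entry c' = n - 1) : False := by
  have hcor_c := corner_of_entry_max S c hc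
  have hcor_c' := corner_of_entry_max T c' hc'
  -- c is not immediately after c', and c' is not immediately after c
  have hna1 : c ≠ (c'.1, c'.2 + 1) := by
    intro h; rw [h, hcor_c'.1] at hTc; omega
  have hna2 : c ≠ (c'.1 + 1, c'.2) := by
    intro h; rw [h, hcor_c'.2] at hTc; omega
  have hnb1 : c' ≠ (c.1, c.2 + 1) := by
    intro h; rw [h, hcor_c.1] at hSc'; omega
  have hnb2 : c' ≠ (c.1 + 1, c.2) := by
    intro h; rw [h, hcor_c.2] at hSc'; omega
  -- c' is an outer corner of the shape of S
  have hScor' : S.entry (c'.1, c'.2 + 1) = 0 ∧ S.entry (c'.1 + 1, c'.2) = 0 := by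
    constructor
    · by_contra hne
      have hlt := S.row_lt c'.1 c'.2 hne
      rw [Prod.mk.eta, hSc'] at hlt
      have hle := S.le_n (c'.1, c'.2 + 1)
      have heqn : S.entry (c'.1, c'.2 + 1) = n := by omega
      have := S.inj (c'.1, c'.2 + 1) c (by omega) (by rw [heqn, hc])
      exact hna1 this.symm
    · by_contra hne
      have hlt := S.col_lt c'.1 c'.2 hne
      rw [Prod.mk.eta, hSc'] at hlt
      have hle := S.le_n (c'.1 + 1, c'.2)
      have heqn : S.entry (c'.1 + 1, c'.2) = n := by omega
      have := S.inj (c'.1 + 1, c'.2) c (by omega) (by rw [heqn, hc])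
      exact hna2 this.symm
  -- c is an outer corner of the shape of T
  have hTcor : T.entry (c.1, c.2 + 1) = 0 ∧ T.entry (c.1 + 1, c.2) = 0 := by
    constructor
    · by_contra hne
      have hlt := T.row_lt c.1 c.2 hne
      rw [Prod.mk.eta, hTc] at hlt
      have hle := T.le_n (c.1, c.2 + 1)
      have heqn : T.entry (c.1, c.2 + 1) = n := by omega
      have := T.inj (c.1, c.2 + 1) c' (by omega) (by rw [heqn, hc'])
      exact hnb1 this.symm
    · by_contra hne
      have hlt := T.col_lt c.1 c.2 hne
      rw [Prod.mk.eta, hTc] at hlt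
      have hle := T.le_n (c.1 + 1, c.2)
      have heqn : T.entry (c.1 + 1, c.2) = n := by omega
      have := T.inj (c.1 + 1, c.2) c' (by omega) (by rw [heqn, hc'])
      exact hnb2 this.symm
  -- the shapes of S and T coincide
  obtain ⟨e, key⟩ := del_top_transfer S T c (by omega) hc hM
  have he : e = c := by
    rcases (key c).1 (Or.inr rfl) with h | h
    · rw [hTc] at h; omega
    · exact h.symm
  rw [he] at key
  have hshape : ∀ x : Cell, S.entry x = 0 ↔ T.entry x = 0 := by
    intro x
    by_cases hxc : x = c
    · subst hxc
      constructor
      · intro hh; rw [hc] at hh; omega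
      · intro hh; rw [hTc] at hh; omega
    · constructor
      · intro hx
        rcases (key x).1 (Or.inl hx) with h | h
        · exact h
        · exact absurd h hxc
      · intro hx
        rcases (key x).2 (Or.inl hx) with h | h
        · exact h
        · exact absurd h hxc
  -- cells with small entries in S lie weakly above-left of c'
  have hSle : ∀ (m : ℕ) (w : Cell), 1 ≤ m → m ≤ n - 2 → S.entry w = m →
      (w.1 ≤ c'.1 ∧ w.2 ≤ c'.2) := by
    intro m w hm1 hm2 hw
    have hcv := del_corner_val S m w c' (n - 1) (by omega) hw (by omega) (by omega)
      hSc' hScor'.1 hScor'.2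
    rw [if_pos (by omega : m < n - 1)] at hcv
    have hmem : S.del m ∈ minors1 T := by
      rw [← hM]; exact ⟨m, hm1, by omega, rfl⟩
    obtain ⟨m', hm1', hm2', heq⟩ := hmem
    have hmax := del_at_max T c' m' hc' hm1' hm2'
    rw [← heq] at hmax
    have hg0 : S.del m c' = 0 := by
      rcases hcv with h | h
      · exfalso; rcases hmax with h2 | h2 <;> rw [h] at h2 <;> omega
      · exact h
    obtain ⟨e2, hle1, hle2, he2⟩ := del_zero_iff S m w (by omega) hw
    rcases (he2 c').1 hg0 with h | h
    · rw [hSc'] at h; omega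
    · rw [← h] at hle1 hle2; exact ⟨hle1, hle2⟩
  -- cells with small entries in T lie weakly above-left of c
  have hTle : ∀ (m : ℕ) (w : Cell), 1 ≤ m → m ≤ n - 2 → T.entry w = m →
      (w.1 ≤ c.1 ∧ w.2 ≤ c.2) := by
    intro m w hm1 hm2 hw
    have hcv := del_corner_val T m w c (n - 1) (by omega) hw (by omega) (by omega)
      hTc hTcor.1 hTcor.2
    rw [if_pos (by omega : m < n - 1)] at hcv
    have hmem : T.del m ∈ minors1 S := by
      rw [hM]; exact ⟨m, hm1, by omega, rfl⟩
    obtain ⟨m', hm1', hm2', heq⟩ := hmem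
    have hmax := del_at_max S c m' hc hm1' hm2'
    rw [← heq] at hmax
    have hg0 : T.del m c = 0 := by
      rcases hcv with h | h
      · exfalso; rcases hmax with h2 | h2 <;> rw [h] at h2 <;> omega
      · exact h
    obtain ⟨e2, hle1, hle2, he2⟩ := del_zero_iff T m w (by omega) hw
    rcases (he2 c).1 hg0 with h | h
    · rw [hTc] at h; omega
    · rw [← h] at hle1 hle2; exact ⟨hle1, hle2⟩
  -- every other cell of the common shape is weakly above-left of both c and c'
  have hmost : ∀ z : Cell, S.entry z ≠ 0 → z ≠ c → z ≠ c' →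
      ((z.1 ≤ c.1 ∧ z.2 ≤ c.2) ∧ (z.1 ≤ c'.1 ∧ z.2 ≤ c'.2)) := by
    intro z hz hzc hzc'
    have hm := S.le_n z
    have hmn : S.entry z ≠ n := fun h => hzc (S.inj z c hz (by rw [h, hc]))
    have hmn1 : S.entry z ≠ n - 1 := fun h => hzc' (S.inj z c' hz (by rw [h, hSc']))
    have h2 := hSle (S.entry z) z (by omega) (by omega) rfl
    have hTz : T.entry z ≠ 0 := fun h => hz ((hshape z).2 h)
    have hTm := T.le_n z
    have hTn : T.entry z ≠ n := fun h => hzc' (T.inj z c' hTz (by rw [h, hc']))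
    have hTn1 : T.entry z ≠ n - 1 := fun h => hzc (T.inj z c hTz (by rw [h, hTc]))
    have h1 := hTle (T.entry z) z (by omega) (by omega) rfl
    exact ⟨h1, h2⟩
  -- c and c' are incomparable
  have hlc : S.entry c ≠ 0 := by rw [hc]; omega
  have hlc' : S.entry c' ≠ 0 := by rw [hSc']; omega
  have hnc1 : ¬(c.1 ≤ c'.1 ∧ c.2 ≤ c'.2) := by
    rintro ⟨h1, h2⟩
    have hne : c.1 ≠ c'.1 ∨ c.2 ≠ c'.2 := by
      by_contra hcon
      push_neg at hcon
      exact hcc (Prod.ext_iff.2 ⟨hcon.1, hcon.2⟩)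
    rcases Nat.lt_or_ge c.1 c'.1 with hl | hl
    · have := S.diagram c'.1 c'.2 (c.1 + 1) c.2 (by omega) h2
        (by rw [Prod.mk.eta]; exact hlc')
      exact this hcor_c.2
    · have hl2 : c.2 < c'.2 := by omega
      have := S.diagram c'.1 c'.2 c.1 (c.2 + 1) (by omega) (by omega)
        (by rw [Prod.mk.eta]; exact hlc')
      exact this hcor_c.1
  have hnc2 : ¬(c'.1 ≤ c.1 ∧ c'.2 ≤ c.2) := by
    rintro ⟨h1, h2⟩
    have hne : c.1 ≠ c'.1 ∨ c.2 ≠ c'.2 := by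
      by_contra hcon
      push_neg at hcon
      exact hcc (Prod.ext_iff.2 ⟨hcon.1, hcon.2⟩)
    rcases Nat.lt_or_ge c'.1 c.1 with hl | hl
    · have := S.diagram c.1 c.2 (c'.1 + 1) c'.2 (by omega) h2
        (by rw [Prod.mk.eta]; exact hlc)
      exact this hScor'.2
    · have hl2 : c'.2 < c.2 := by omega
      have := S.diagram c.1 c.2 c'.1 (c'.2 + 1) (by omega) (by omega)
        (by rw [Prod.mk.eta]; exact hlc)
      exact this hScor'.1
  push_neg at hnc1 hnc2
  rcases Nat.lt_or_ge c.1 c'.1 with hb | hb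
  · exact geom_small S hn c c' hlc hlc' hmost hb (by omega)
  · have hcb : c'.1 < c.1 := by
      rcases Nat.lt_or_ge c'.1 c.1 with h | h
      · exact h
      · exfalso
        have hq : c.1 = c'.1 := by omega
        have h2 := hnc1 (le_of_eq hq)
        have h3 := hnc2 (le_of_eq hq.symm)
        omega
    exact geom_small S hn c' c hlc' hlc
      (fun z hz a b => ⟨(hmost z hz b a).2, (hmost z hz b a).1⟩) hcb (by omega)

end IIA
section FINAL

lemma main_ne {n : ℕ} (hn : 4 ≤ n) (S T : SYT n) (c c' : Cell)
    (hc : S.entry c = n) (hc' : T.entry c' = n)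
    (hM : minors1 S = minors1 T) : c = c' := by
  by_contra hcc
  have hTc : T.entry c = 0 ∨ T.entry c = n - 1 := by
    have hmem : T.del n ∈ minors1 S := by
      rw [hM]; exact ⟨n, by omega, le_refl n, rfl⟩
    obtain ⟨m', hm1, hm2, heq⟩ := hmem
    have hmax := del_at_max S c m' hc hm1 hm2
    rw [← heq, del_top T c' (by omega) hc' c, Function.update_of_ne hcc] at hmax
    exact hmax
  have hSc' : S.entry c' = 0 ∨ S.entry c' = n - 1 := by
    have hmem : S.del n ∈ minors1 T := by
      rw [← hM]; exact ⟨n, by omega, le_refl n, rfl⟩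
    obtain ⟨m', hm1, hm2, heq⟩ := hmem
    have hmax := del_at_max T c' m' hc' hm1 hm2
    rw [← heq, del_top S c (by omega) hc c',
      Function.update_of_ne (Ne.symm hcc)] at hmax
    exact hmax
  rcases hTc with hTc | hTc <;> rcases hSc' with hSc' | hSc'
  · exact case_I hn S T c c' hc hc' hM hcc hTc hSc'
  · exact case_IIb hn T S c' c hc' hc hM.symm (Ne.symm hcc)
      (by rw [hSc']; omega) hTc
  · exact case_IIb hn S T c c' hc hc' hM hcc (by rw [hTc]; omega) hSc'
  · exact case_IIa hn S T c c' hc hc' hM hcc hTc hSc'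

end FINAL

/-- The set of 1-minors of a standard Young tableau with at least 4 entries
determines the location of the largest entry `n`. -/
theorem syt_set_of_one_minors_determines_location_of_largest
    (n : ℕ) (hn : 4 ≤ n) (S T : SYT n)
    (h : minors1 S = minors1 T) :
    ∀ c : ℕ × ℕ, S.entry c = n ↔ T.entry c = n := by
  obtain ⟨cS, hcS⟩ := S.exists_cell n (by omega) (le_refl n)
  obtain ⟨cT, hcT⟩ := T.exists_cell n (by omega) (le_refl n)
  have hc : cS = cT := main_ne hn S T cS cT hcS hcT h
  intro c
  constructor
  · intro hcn
    have : c = cS := S.inj c cS (by rw [hcn]; omega) (by rw [hcn, hcS])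
    rw [this, hc, hcT]
  · intro hcn
    have : c = cT := T.inj c cT (by rw [hcn]; omega) (by rw [hcn, hcT])
    rw [this, ← hc, hcS]
end

section
/- Let T be a standard Young tableau with n ≥ 2 entries and let 1 ≤ m ≤ n−1. Then (T − m) − (n−1) = (T − n) − m; that is, deleting m from T and then deleting the largest entry n−1 of the resulting tableau gives the same tableau as first deleting n from T and then deleting m. -/
open Classical

section Aux

open Function

lemma jdtAux_term (fuel : ℕ) (f : ℕ × ℕ → ℕ) (c : ℕ × ℕ)
    (h1 : f (c.1, c.2 + 1) = 0) (h2 : f (c.1 + 1, c.2) = 0) :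
    jdtAux fuel f c = f := by
  cases fuel <;> simp [jdtAux, h1, h2]

lemma jdtAux_step_right (fuel : ℕ) (f : ℕ × ℕ → ℕ) (c : ℕ × ℕ)
    (h : ¬(f (c.1, c.2 + 1) = 0 ∧ f (c.1 + 1, c.2) = 0))
    (h2 : f (c.1 + 1, c.2) = 0 ∨ (f (c.1, c.2 + 1) ≠ 0 ∧ f (c.1, c.2 + 1) < f (c.1 + 1, c.2))) :
    jdtAux (fuel + 1) f c =
      jdtAux fuel (Function.update (Function.update f c (f (c.1, c.2 + 1))) (c.1, c.2 + 1) 0)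
        (c.1, c.2 + 1) := by
  simp only [jdtAux, if_neg h, if_pos h2]

lemma jdtAux_step_below (fuel : ℕ) (f : ℕ × ℕ → ℕ) (c : ℕ × ℕ)
    (h : ¬(f (c.1, c.2 + 1) = 0 ∧ f (c.1 + 1, c.2) = 0))
    (h2 : ¬(f (c.1 + 1, c.2) = 0 ∨ (f (c.1, c.2 + 1) ≠ 0 ∧ f (c.1, c.2 + 1) < f (c.1 + 1, c.2)))) :
    jdtAux (fuel + 1) f c =
      jdtAux fuel (Function.update (Function.update f c (f (c.1 + 1, c.2))) (c.1 + 1, c.2) 0)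
        (c.1 + 1, c.2) := by
  simp only [jdtAux, if_neg h, if_neg h2]

/-- Invariant for the sliding process: the support of `f` is `D` minus the
vacancy `v`; the maximal entry `N` sits at `cn`; no entry equals `m₀`. -/
def Good (N m₀ : ℕ) (cn : ℕ × ℕ) (D : Set (ℕ × ℕ)) (f : ℕ × ℕ → ℕ) (v : ℕ × ℕ) : Prop :=
  (∀ x, f x ≠ 0 ↔ x ∈ D ∧ x ≠ v) ∧ v ∈ D ∧ f cn = N ∧
    (∀ x, f x = N → x = cn) ∧ (∀ x, f x ≤ N) ∧ (∀ x, f x ≠ m₀)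

lemma Good.step {N m₀ : ℕ} {cn : ℕ × ℕ} {D : Set (ℕ × ℕ)} {f : ℕ × ℕ → ℕ} {v : ℕ × ℕ}
    (hG : Good N m₀ cn D f v) (w : ℕ × ℕ) (hw : f w ≠ 0) (hwc : w ≠ cn) :
    Good N m₀ cn D (Function.update (Function.update f v (f w)) w 0) w := by
  obtain ⟨H1, H2, H3, H4, H5, H6⟩ := hG
  have hv0 : f v = 0 := by
    by_contra h; exact ((H1 v).mp h).2 rfl
  have hwv : w ≠ v := fun h => hw (h ▸ hv0)
  have hm0 : m₀ ≠ 0 := fun h => H6 v (h ▸ hv0)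
  have hN0 : N ≠ 0 := fun h => hw (Nat.le_zero.mp (h ▸ H5 w))
  have hvcn : v ≠ cn := fun h => hN0 (by rw [← H3, ← h, hv0])
  refine ⟨?_, (H1 w).mp hw |>.1, ?_, ?_, ?_, ?_⟩
  · intro x
    rcases eq_or_ne x w with rfl | hxw
    · simp
    rcases eq_or_ne x v with rfl | hxv
    · simp [Function.update_of_ne hwv.symm, hw, H2, hwv.symm]
    · simp only [Function.update_of_ne hxw, Function.update_of_ne hxv, H1 x]
      exact ⟨fun ⟨h1, _⟩ => ⟨h1, hxw⟩, fun ⟨h1, _⟩ => ⟨h1, hxv⟩⟩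
  · have hcnv : cn ≠ v := hvcn.symm
    rw [Function.update_of_ne hwc.symm, Function.update_of_ne hcnv, H3]
  · intro x hx
    rcases eq_or_ne x w with rfl | hxw
    · rw [Function.update_self] at hx
      exact absurd hx.symm hN0
    rw [Function.update_of_ne hxw] at hx
    rcases eq_or_ne x v with rfl | hxv
    · rw [Function.update_self] at hx
      exact absurd (H4 w hx) hwc
    · rw [Function.update_of_ne hxv] at hx
      exact H4 x hx
  · intro x
    rcases eq_or_ne x w with rfl | hxw
    · simp
    rw [Function.update_of_ne hxw]
    rcases eq_or_ne x v with rfl | hxv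
    · rw [Function.update_self]; exact H5 w
    · rw [Function.update_of_ne hxv]; exact H5 x
  · intro x
    rcases eq_or_ne x w with rfl | hxw
    · simpa using (Ne.symm hm0)
    rw [Function.update_of_ne hxw]
    rcases eq_or_ne x v with rfl | hxv
    · rw [Function.update_self]; exact H6 w
    · rw [Function.update_of_ne hxv]; exact H6 x

lemma upd_comm3 (f : ℕ × ℕ → ℕ) (c v w : ℕ × ℕ) (x y : ℕ) (h1 : c ≠ v) (h2 : c ≠ w) :
    Function.update (Function.update (Function.update f c 0) v x) w y
      = Function.update (Function.update (Function.update f v x) w y) c 0 := by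
  rw [Function.update_comm h1, Function.update_comm h2]

lemma jdtAux_term' (fuel : ℕ) (f : ℕ × ℕ → ℕ) (i j : ℕ)
    (h1 : f (i, j + 1) = 0) (h2 : f (i + 1, j) = 0) :
    jdtAux fuel f (i, j) = f := jdtAux_term fuel f (i, j) h1 h2

lemma jdtAux_right' (fuel : ℕ) (f : ℕ × ℕ → ℕ) (i j : ℕ)
    (h : ¬(f (i, j + 1) = 0 ∧ f (i + 1, j) = 0))
    (h2 : f (i + 1, j) = 0 ∨ (f (i, j + 1) ≠ 0 ∧ f (i, j + 1) < f (i + 1, j))) :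
    jdtAux (fuel + 1) f (i, j) =
      jdtAux fuel (Function.update (Function.update f (i, j) (f (i, j + 1))) (i, j + 1) 0)
        (i, j + 1) :=
  jdtAux_step_right fuel f (i, j) h h2

lemma jdtAux_below' (fuel : ℕ) (f : ℕ × ℕ → ℕ) (i j : ℕ)
    (h : ¬(f (i, j + 1) = 0 ∧ f (i + 1, j) = 0))
    (h2 : ¬(f (i + 1, j) = 0 ∨ (f (i, j + 1) ≠ 0 ∧ f (i, j + 1) < f (i + 1, j)))) :
    jdtAux (fuel + 1) f (i, j) =
      jdtAux fuel (Function.update (Function.update f (i, j) (f (i + 1, j))) (i + 1, j) 0)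
        (i + 1, j) :=
  jdtAux_step_below fuel f (i, j) h h2

lemma jdt_main (N m₀ : ℕ) (hN0 : N ≠ 0) (c1 c2 : ℕ) (D : Set (ℕ × ℕ))
    (Hr : (c1, c2 + 1) ∉ D) (Hb : (c1 + 1, c2) ∉ D) (fuel : ℕ) :
    ∀ (f : ℕ × ℕ → ℕ) (v : ℕ × ℕ), Good N m₀ (c1, c2) D f v →
    ∃ e, (jdtAux fuel f v) e = N ∧
      jdtAux fuel (Function.update f (c1, c2) 0) v = Function.update (jdtAux fuel f v) e 0 ∧
      (jdtAux fuel f v) (e.1, e.2 + 1) = 0 ∧ (jdtAux fuel f v) (e.1 + 1, e.2) = 0 ∧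
      (∀ x, (jdtAux fuel f v) x = N → x = e) ∧
      (∀ x, (jdtAux fuel f v) x ≤ N) ∧ (∀ x, (jdtAux fuel f v) x ≠ m₀) := by
  induction fuel with
  | zero =>
    rintro f v ⟨H1, H2, H3, H4, H5, H6⟩
    have hr0 : f (c1, c2 + 1) = 0 := by
      by_contra h; exact Hr ((H1 _).mp h).1
    have hb0 : f (c1 + 1, c2) = 0 := by
      by_contra h; exact Hb ((H1 _).mp h).1
    exact ⟨(c1, c2), H3, rfl, hr0, hb0, H4, H5, H6⟩
  | succ fuel IH =>
    rintro f ⟨v1, v2⟩ hG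
    obtain ⟨H1, H2, H3, H4, H5, H6⟩ := hG
    have hG' : Good N m₀ (c1, c2) D f (v1, v2) := ⟨H1, H2, H3, H4, H5, H6⟩
    have hv0 : f (v1, v2) = 0 := by by_contra h; exact ((H1 _).mp h).2 rfl
    have hrD : f (c1, c2 + 1) = 0 := by by_contra h; exact Hr ((H1 _).mp h).1
    have hbD : f (c1 + 1, c2) = 0 := by by_contra h; exact Hb ((H1 _).mp h).1
    have hvcn : (v1, v2) ≠ (c1, c2) := fun h => hN0 (by rw [← H3, ← h, hv0])
    by_cases hterm : f (v1, v2 + 1) = 0 ∧ f (v1 + 1, v2) = 0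
    · -- terminal for both
      have upd0 : ∀ x, f x = 0 → Function.update f (c1, c2) 0 x = 0 := by
        intro x hx
        rcases eq_or_ne x (c1, c2) with rfl | h
        · simp
        · rwa [Function.update_of_ne h]
      have e1 : jdtAux (fuel + 1) f (v1, v2) = f :=
        jdtAux_term' _ _ _ _ hterm.1 hterm.2
      have e2 : jdtAux (fuel + 1) (Function.update f (c1, c2) 0) (v1, v2) =
          Function.update f (c1, c2) 0 :=
        jdtAux_term' _ _ _ _ (upd0 _ hterm.1) (upd0 _ hterm.2)
      rw [e1, e2]
      exact ⟨(c1, c2), H3, rfl, hrD, hbD, H4, H5, H6⟩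
    · by_cases hA : (v1, v2 + 1) = (c1, c2)
      · -- the max is the right neighbour of the vacancy
        rw [Prod.mk.injEq] at hA
        obtain ⟨hA1, hA2⟩ := hA
        subst hA1; subst hA2
        have hrN : f (v1, v2 + 1) = N := H3
        have hbne : (v1 + 1, v2) ≠ (v1, v2 + 1) := by
          simp [Prod.mk.injEq]
        have hbN : f (v1 + 1, v2) < N :=
          lt_of_le_of_ne (H5 _) (fun h => hbne (H4 _ h))
        have hnt : ¬(f (v1, v2 + 1) = 0 ∧ f (v1 + 1, v2) = 0) := fun h => hN0 (hrN.symm.trans h.1)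
        by_cases hb : f (v1 + 1, v2) = 0
        · -- N slides into the vacancy, then everything stops
          have hm0 : m₀ ≠ 0 := fun h => H6 _ (h ▸ hv0)
          set f₁ := Function.update (Function.update f (v1, v2) (f (v1, v2 + 1)))
            (v1, v2 + 1) 0 with hf₁
          have e1 : jdtAux (fuel + 1) f (v1, v2) = jdtAux fuel f₁ (v1, v2 + 1) :=
            jdtAux_right' fuel f v1 v2 hnt (Or.inl hb)
          have e1b : jdtAux fuel f₁ (v1, v2 + 1) = f₁ := by
            apply jdtAux_term' fuel f₁ v1 (v2 + 1)
            · rw [hf₁, Function.update_of_ne (by simp <;> omega), Function.update_of_ne (by simp <;> omega)]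
              exact hrD
            · rw [hf₁, Function.update_of_ne (by simp <;> omega), Function.update_of_ne (by simp <;> omega)]
              exact hbD
          have e2 : jdtAux (fuel + 1) (Function.update f (v1, v2 + 1) 0) (v1, v2) =
              Function.update f (v1, v2 + 1) 0 := by
            apply jdtAux_term' (fuel + 1) _ v1 v2
            · exact Function.update_self _ _ _
            · rw [Function.update_of_ne hbne]; exact hb
          rw [e1, e1b, e2]
          refine ⟨(v1, v2), ?_, ?_, ?_, ?_, ?_, ?_, ?_⟩
          · rw [hf₁, Function.update_of_ne (by simp <;> omega), Function.update_self]; exact hrN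
          · funext x
            rcases eq_or_ne x (v1, v2) with rfl | hx2
            · rw [Function.update_of_ne hvcn, hv0, Function.update_self]
            rcases eq_or_ne x (v1, v2 + 1) with rfl | hx1
            · rw [Function.update_self, Function.update_of_ne (Ne.symm hvcn), hf₁,
                Function.update_self]
            · rw [Function.update_of_ne hx1, Function.update_of_ne hx2, hf₁,
                Function.update_of_ne hx1, Function.update_of_ne hx2]
          · show f₁ (v1, v2 + 1) = 0
            rw [hf₁, Function.update_self]
          · show f₁ (v1 + 1, v2) = 0
            rw [hf₁, Function.update_of_ne (by simp <;> omega), Function.update_of_ne (by simp <;> omega)]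
            exact hb
          · intro x hx
            rw [hf₁] at hx
            rcases eq_or_ne x (v1, v2 + 1) with rfl | hx1
            · rw [Function.update_self] at hx; exact absurd hx.symm hN0
            rcases eq_or_ne x (v1, v2) with rfl | hx2
            · rfl
            · rw [Function.update_of_ne hx1, Function.update_of_ne hx2] at hx
              exact absurd (H4 x hx) hx1
          · intro x
            rw [hf₁]
            rcases eq_or_ne x (v1, v2 + 1) with rfl | hx1
            · simp
            rcases eq_or_ne x (v1, v2) with rfl | hx2
            · rw [Function.update_of_ne hx1, Function.update_self]; exact H5 _
            · rw [Function.update_of_ne hx1, Function.update_of_ne hx2]; exact H5 x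
          · intro x
            rw [hf₁]
            rcases eq_or_ne x (v1, v2 + 1) with rfl | hx1
            · simpa using Ne.symm hm0
            rcases eq_or_ne x (v1, v2) with rfl | hx2
            · rw [Function.update_of_ne hx1, Function.update_self]; exact H6 _
            · rw [Function.update_of_ne hx1, Function.update_of_ne hx2]; exact H6 x
        · -- both sides slide the below entry
          have hcondf : ¬(f (v1 + 1, v2) = 0 ∨
              (f (v1, v2 + 1) ≠ 0 ∧ f (v1, v2 + 1) < f (v1 + 1, v2))) := by
            rintro (h | ⟨-, h⟩)
            · exact hb h
            · rw [hrN] at h; omega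
          obtain ⟨e, he1, he2, he3, he4, he5, he6, he7⟩ :=
            IH _ _ (hG'.step (v1 + 1, v2) hb hbne)
          have e1 := jdtAux_below' fuel f v1 v2 hnt hcondf
          have hb' : Function.update f (v1, v2 + 1) 0 (v1 + 1, v2) = f (v1 + 1, v2) :=
            Function.update_of_ne hbne _ _
          have e2 : jdtAux (fuel + 1) (Function.update f (v1, v2 + 1) 0) (v1, v2) =
              jdtAux fuel (Function.update (Function.update (Function.update f (v1, v2)
                (f (v1 + 1, v2))) (v1 + 1, v2) 0) (v1, v2 + 1) 0) (v1 + 1, v2) := by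
            rw [jdtAux_below' fuel _ v1 v2
              (by rw [hb']; intro h; exact hb h.2)
              (by rw [hb', Function.update_self]; rintro (h | ⟨h, -⟩); exacts [hb h, h rfl])]
            rw [hb', upd_comm3 f (v1, v2 + 1) (v1, v2) (v1 + 1, v2) _ _ (by simp <;> omega)
              (Ne.symm hbne)]
          rw [e1, e2]
          exact ⟨e, he1, he2, he3, he4, he5, he6, he7⟩
      · by_cases hB : (v1 + 1, v2) = (c1, c2)
        · -- the max is the below neighbour of the vacancy
          rw [Prod.mk.injEq] at hB
          obtain ⟨hB1, hB2⟩ := hB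
          subst hB1; subst hB2
          have hbNv : f (v1 + 1, v2) = N := H3
          have hrne : (v1, v2 + 1) ≠ (v1 + 1, v2) := by
            simp [Prod.mk.injEq]
          have hrN : f (v1, v2 + 1) < N :=
            lt_of_le_of_ne (H5 _) (fun h => hrne (H4 _ h))
          have hnt : ¬(f (v1, v2 + 1) = 0 ∧ f (v1 + 1, v2) = 0) := fun h => hN0 (hbNv.symm.trans h.2)
          by_cases hr : f (v1, v2 + 1) = 0
          · -- N slides into the vacancy, then everything stops
            have hm0 : m₀ ≠ 0 := fun h => H6 _ (h ▸ hv0)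
            have hcondf : ¬(f (v1 + 1, v2) = 0 ∨
                (f (v1, v2 + 1) ≠ 0 ∧ f (v1, v2 + 1) < f (v1 + 1, v2))) := by
              rintro (h | ⟨h, -⟩)
              · exact hN0 (hbNv.symm.trans h)
              · exact h hr
            set f₁ := Function.update (Function.update f (v1, v2) (f (v1 + 1, v2)))
              (v1 + 1, v2) 0 with hf₁
            have e1 : jdtAux (fuel + 1) f (v1, v2) = jdtAux fuel f₁ (v1 + 1, v2) :=
              jdtAux_below' fuel f v1 v2 hnt hcondf
            have e1b : jdtAux fuel f₁ (v1 + 1, v2) = f₁ := by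
              apply jdtAux_term' fuel f₁ (v1 + 1) v2
              · rw [hf₁, Function.update_of_ne (by simp <;> omega),
                  Function.update_of_ne (by simp <;> omega)]
                exact hrD
              · rw [hf₁, Function.update_of_ne (by simp <;> omega),
                  Function.update_of_ne (by simp <;> omega)]
                exact hbD
            have e2 : jdtAux (fuel + 1) (Function.update f (v1 + 1, v2) 0) (v1, v2) =
                Function.update f (v1 + 1, v2) 0 := by
              apply jdtAux_term' (fuel + 1) _ v1 v2
              · rw [Function.update_of_ne hrne]; exact hr
              · exact Function.update_self _ _ _
            rw [e1, e1b, e2]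
            refine ⟨(v1, v2), ?_, ?_, ?_, ?_, ?_, ?_, ?_⟩
            · rw [hf₁, Function.update_of_ne (by simp <;> omega), Function.update_self]
              exact hbNv
            · funext x
              rcases eq_or_ne x (v1, v2) with rfl | hx2
              · rw [Function.update_of_ne hvcn, hv0, Function.update_self]
              rcases eq_or_ne x (v1 + 1, v2) with rfl | hx1
              · rw [Function.update_self, Function.update_of_ne (Ne.symm hvcn), hf₁,
                  Function.update_self]
              · rw [Function.update_of_ne hx1, Function.update_of_ne hx2, hf₁,
                  Function.update_of_ne hx1, Function.update_of_ne hx2]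
            · show f₁ (v1, v2 + 1) = 0
              rw [hf₁, Function.update_of_ne (by simp <;> omega),
                Function.update_of_ne (by simp <;> omega)]
              exact hr
            · show f₁ (v1 + 1, v2) = 0
              rw [hf₁, Function.update_self]
            · intro x hx
              rw [hf₁] at hx
              rcases eq_or_ne x (v1 + 1, v2) with rfl | hx1
              · rw [Function.update_self] at hx; exact absurd hx.symm hN0
              rcases eq_or_ne x (v1, v2) with rfl | hx2
              · rfl
              · rw [Function.update_of_ne hx1, Function.update_of_ne hx2] at hx
                exact absurd (H4 x hx) hx1
            · intro x
              rw [hf₁]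
              rcases eq_or_ne x (v1 + 1, v2) with rfl | hx1
              · simp
              rcases eq_or_ne x (v1, v2) with rfl | hx2
              · rw [Function.update_of_ne hx1, Function.update_self]; exact H5 _
              · rw [Function.update_of_ne hx1, Function.update_of_ne hx2]; exact H5 x
            · intro x
              rw [hf₁]
              rcases eq_or_ne x (v1 + 1, v2) with rfl | hx1
              · simpa using Ne.symm hm0
              rcases eq_or_ne x (v1, v2) with rfl | hx2
              · rw [Function.update_of_ne hx1, Function.update_self]; exact H6 _
              · rw [Function.update_of_ne hx1, Function.update_of_ne hx2]; exact H6 x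
          · -- both sides slide the right entry
            have hcondf : f (v1 + 1, v2) = 0 ∨
                (f (v1, v2 + 1) ≠ 0 ∧ f (v1, v2 + 1) < f (v1 + 1, v2)) :=
              Or.inr ⟨hr, by rw [hbNv]; exact hrN⟩
            obtain ⟨e, he1, he2, he3, he4, he5, he6, he7⟩ :=
              IH _ _ (hG'.step (v1, v2 + 1) hr hrne)
            have e1 := jdtAux_right' fuel f v1 v2 hnt hcondf
            have hr' : Function.update f (v1 + 1, v2) 0 (v1, v2 + 1) = f (v1, v2 + 1) :=
              Function.update_of_ne hrne _ _
            have e2 : jdtAux (fuel + 1) (Function.update f (v1 + 1, v2) 0) (v1, v2) =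
                jdtAux fuel (Function.update (Function.update (Function.update f (v1, v2)
                  (f (v1, v2 + 1))) (v1, v2 + 1) 0) (v1 + 1, v2) 0) (v1, v2 + 1) := by
              rw [jdtAux_right' fuel _ v1 v2
                (by rw [hr']; intro h; exact hr h.1)
                (Or.inl (Function.update_self _ _ _))]
              rw [hr', upd_comm3 f (v1 + 1, v2) (v1, v2) (v1, v2 + 1) _ _ (Ne.symm hvcn)
                (Ne.symm hrne)]
            rw [e1, e2]
            exact ⟨e, he1, he2, he3, he4, he5, he6, he7⟩
        · -- the max is not adjacent to the vacancy
          have hrne : (v1, v2 + 1) ≠ (c1, c2) := hA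
          have hbne : (v1 + 1, v2) ≠ (c1, c2) := hB
          have hr' : Function.update f (c1, c2) 0 (v1, v2 + 1) = f (v1, v2 + 1) :=
            Function.update_of_ne hrne _ _
          have hb' : Function.update f (c1, c2) 0 (v1 + 1, v2) = f (v1 + 1, v2) :=
            Function.update_of_ne hbne _ _
          by_cases hcond : f (v1 + 1, v2) = 0 ∨ (f (v1, v2 + 1) ≠ 0 ∧ f (v1, v2 + 1) < f (v1 + 1, v2))
          · -- both sides slide the right entry
            have hw : f (v1, v2 + 1) ≠ 0 := by
              rcases hcond with h | h
              · exact fun hr0 => hterm ⟨hr0, h⟩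
              · exact h.1
            obtain ⟨e, he1, he2, he3, he4, he5, he6, he7⟩ :=
              IH _ _ (hG'.step (v1, v2 + 1) hw hrne)
            have e1 := jdtAux_right' fuel f v1 v2 hterm hcond
            have e2 : jdtAux (fuel + 1) (Function.update f (c1, c2) 0) (v1, v2) =
                jdtAux fuel (Function.update (Function.update (Function.update f (v1, v2)
                  (f (v1, v2 + 1))) (v1, v2 + 1) 0) (c1, c2) 0) (v1, v2 + 1) := by
              rw [jdtAux_right' fuel _ v1 v2 (by rw [hr', hb']; exact hterm)
                (by rw [hr', hb']; exact hcond)]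
              rw [hr', upd_comm3 f (c1, c2) (v1, v2) (v1, v2 + 1) _ _ (Ne.symm hvcn)
                (Ne.symm hrne)]
            rw [e1, e2]
            exact ⟨e, he1, he2, he3, he4, he5, he6, he7⟩
          · -- both sides slide the below entry
            have hw : f (v1 + 1, v2) ≠ 0 := fun h => hcond (Or.inl h)
            obtain ⟨e, he1, he2, he3, he4, he5, he6, he7⟩ :=
              IH _ _ (hG'.step (v1 + 1, v2) hw hbne)
            have e1 := jdtAux_below' fuel f v1 v2 hterm hcond
            have e2 : jdtAux (fuel + 1) (Function.update f (c1, c2) 0) (v1, v2) =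
                jdtAux fuel (Function.update (Function.update (Function.update f (v1, v2)
                  (f (v1 + 1, v2))) (v1 + 1, v2) 0) (c1, c2) 0) (v1 + 1, v2) := by
              rw [jdtAux_below' fuel _ v1 v2 (by rw [hr', hb']; exact hterm)
                (by rw [hr', hb']; exact hcond)]
              rw [hb', upd_comm3 f (c1, c2) (v1, v2) (v1 + 1, v2) _ _ (Ne.symm hvcn)
                (Ne.symm hbne)]
            rw [e1, e2]
            exact ⟨e, he1, he2, he3, he4, he5, he6, he7⟩

lemma delRaw_spec (fuel : ℕ) (f : ℕ × ℕ → ℕ) (m : ℕ) (c : ℕ × ℕ) (hm : 0 < m)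
    (hc : f c = m) (huniq : ∀ x, f x = m → x = c) :
    delRaw fuel f m = fun x =>
      if m < jdtAux fuel (Function.update f c 0) c x then
        jdtAux fuel (Function.update f c 0) c x - 1
      else jdtAux fuel (Function.update f c 0) c x := by
  have h : 0 < m ∧ ∃ c, f c = m := ⟨hm, c, hc⟩
  have hch : Classical.choose h.2 = c := huniq _ (Classical.choose_spec h.2)
  rw [delRaw, dif_pos h, hch]

end Aux

/-- Deleting `m` from `T` and then deleting the largest entry `n - 1` of the
resulting tableau gives the same tableau as first deleting `n` from `T` and
then deleting `m`. -/
theorem syt_del_del_comm_with_largest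
    (n : ℕ) (hn : 2 ≤ n) (T : SYT n) (m : ℕ) (hm1 : 1 ≤ m) (hm2 : m ≤ n - 1) :
    delRaw n (T.del m) (n - 1) = delRaw n (T.del n) m := by
  have hmn : m < n := by omega
  have hm0 : 0 < m := hm1
  -- the cell of the maximal entry n
  obtain ⟨⟨c1, c2⟩, hcn⟩ := T.exists_cell n (by omega) le_rfl
  have huniq_n : ∀ x, T.entry x = n → x = (c1, c2) := fun x hx =>
    T.inj x (c1, c2) (by rw [hx]; omega) (hx.trans hcn.symm)
  have hr0 : T.entry (c1, c2 + 1) = 0 := by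
    by_contra h
    have h2 := T.row_lt c1 c2 h
    have h3 := T.le_n (c1, c2 + 1)
    omega
  have hb0 : T.entry (c1 + 1, c2) = 0 := by
    by_contra h
    have h2 := T.col_lt c1 c2 h
    have h3 := T.le_n (c1 + 1, c2)
    omega
  -- the cell of the entry m
  obtain ⟨a, ha⟩ := T.exists_cell m hm1 (by omega)
  have huniq_m : ∀ x, T.entry x = m → x = a := fun x hx =>
    T.inj x a (by rw [hx]; omega) (hx.trans ha.symm)
  have hacn : ((c1, c2) : ℕ × ℕ) ≠ a := fun h => by
    rw [h] at hcn; rw [hcn] at ha; omega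
  -- `T.del n` is just `T.entry` with the corner cell removed
  have del_n : T.del n = Function.update T.entry (c1, c2) 0 := by
    rw [SYT.del, delRaw_spec n T.entry n (c1, c2) (by omega) hcn huniq_n]
    have hterm : jdtAux n (Function.update T.entry (c1, c2) 0) (c1, c2) =
        Function.update T.entry (c1, c2) 0 := by
      apply jdtAux_term' n _ c1 c2
      · rw [Function.update_of_ne (by simp <;> omega)]; exact hr0
      · rw [Function.update_of_ne (by simp <;> omega)]; exact hb0
    rw [hterm]
    funext x
    have hle : Function.update T.entry (c1, c2) 0 x ≤ n := by
      rcases eq_or_ne x (c1, c2) with rfl | hx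
      · simp
      · rw [Function.update_of_ne hx]; exact T.le_n x
    rw [if_neg (by omega)]
  -- the invariant holds after vacating the cell of m
  have hGood : Good n m (c1, c2) (shapeOf T.entry) (Function.update T.entry a 0) a := by
    refine ⟨?_, ?_, ?_, ?_, ?_, ?_⟩
    · intro x
      rcases eq_or_ne x a with rfl | hx
      · simp
      · rw [Function.update_of_ne hx]
        exact ⟨fun h => ⟨h, hx⟩, fun h => h.1⟩
    · show T.entry a ≠ 0
      rw [ha]; omega
    · rw [Function.update_of_ne hacn]; exact hcn
    · intro x hx
      rcases eq_or_ne x a with rfl | hx1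
      · rw [Function.update_self] at hx; omega
      · rw [Function.update_of_ne hx1] at hx; exact huniq_n x hx
    · intro x
      rcases eq_or_ne x a with rfl | hx1
      · simp
      · rw [Function.update_of_ne hx1]; exact T.le_n x
    · intro x
      rcases eq_or_ne x a with rfl | hx1
      · rw [Function.update_self]; omega
      · rw [Function.update_of_ne hx1]
        exact fun h => hx1 (huniq_m x h)
  obtain ⟨e, he1, he2, he3, he4, he5, he6, he7⟩ :=
    jdt_main n m (by omega) c1 c2 (shapeOf T.entry) (by simp [shapeOf, hr0])
      (by simp [shapeOf, hb0]) n (Function.update T.entry a 0) a hGood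
  set g := jdtAux n (Function.update T.entry a 0) a with hg
  -- `T.del m` is the renumbering of `g`
  have del_m : T.del m = fun x => if m < g x then g x - 1 else g x := by
    rw [SYT.del, delRaw_spec n T.entry m a hm0 ha huniq_m]
  -- compute the right-hand side
  have rhs : delRaw n (T.del n) m =
      fun x => if m < Function.update g e 0 x then Function.update g e 0 x - 1
        else Function.update g e 0 x := by
    rw [del_n, delRaw_spec n (Function.update T.entry (c1, c2) 0) m a hm0
      (by rw [Function.update_of_ne (fun h => hacn h.symm)]; exact ha)
      (fun x hx => by
        rcases eq_or_ne x (c1, c2) with rfl | hx1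
        · rw [Function.update_self] at hx; omega
        · rw [Function.update_of_ne hx1] at hx; exact huniq_m x hx)]
    have hcomm : Function.update (Function.update T.entry (c1, c2) 0) a 0
        = Function.update (Function.update T.entry a 0) (c1, c2) 0 :=
      Function.update_comm hacn 0 0 T.entry
    simp only [hcomm, he2]
  -- compute the left-hand side
  set G := fun x => if m < g x then g x - 1 else g x with hG
  have hGe : G e = n - 1 := by
    rw [hG]; simp only []
    rw [he1, if_pos hmn]
  have hGuniq : ∀ x, G x = n - 1 → x = e := by
    intro x hx
    rw [hG] at hx; simp only [] at hx
    by_cases h : m < g x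
    · rw [if_pos h] at hx
      exact he5 x (by omega)
    · rw [if_neg h] at hx
      exact absurd hx (by have := he7 x; omega)
  have lhs : delRaw n (T.del m) (n - 1) = Function.update G e 0 := by
    rw [del_m, delRaw_spec n G (n - 1) e (by omega) hGe hGuniq]
    have hterm : jdtAux n (Function.update G e 0) e = Function.update G e 0 := by
      apply jdtAux_term n _ e
      · rw [Function.update_of_ne (fun h => by simpa using congrArg Prod.snd h)]
        rw [hG]; simp only []
        rw [he3, if_neg (by omega)]
      · rw [Function.update_of_ne (fun h => by simpa using congrArg Prod.fst h)]
        rw [hG]; simp only []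
        rw [he4, if_neg (by omega)]
    rw [hterm]
    funext x
    have hle : Function.update G e 0 x ≤ n - 1 := by
      rcases eq_or_ne x e with rfl | hx
      · simp
      · rw [Function.update_of_ne hx, hG]; simp only []
        have := he6 x
        split_ifs <;> omega
    rw [if_neg (by omega)]
  rw [lhs, rhs]
  funext x
  rcases eq_or_ne x e with rfl | hx
  · simp
  · rw [Function.update_of_ne hx, Function.update_of_ne hx, hG]
end
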